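/- Define the fourth-order Fourier coefficients C_{j_4 j_3 j_2 j_1} = ∫_t^T φ_{j_4}(s_4) ∫_t^{s_4} φ_{j_3}(s_3) ∫_t^{s_3} φ_{j_2}(s_2) ∫_t^{s_2} φ_{j_1}(s_1) ds_1 ds_2 ds_3 ds_4 with respect to the orthonormal Legendre system. Then lim_{p → ∞} Σ_{j_4=0}^{p} Σ_{j_1=0}^{p} C_{j_4 j_1 j_4 j_1} = 0. -/

import Mathlib

/-!
The affine change of variables onto `[-1, 1]` turns `C_{abab}` into
`(T - t)² / 16 · (2a + 1)(2b + 1) · C_{abab}[P]`, where `C[P]` is built from the unnormalised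
Legendre polynomials. With the primitives `Q_n = ∫_{-1}^x P_n`, which equal
`(P_{n+1} - P_{n-1}) / (2n + 1)` for `n ≥ 1`, integrating by parts expresses `C_{abab}[P]`
through single integrals of products of `P`'s and `Q`'s. Orthogonality and parity kill every
term except those with `a = 0`, `b = 0` or `|a - b| = 1`, and the surviving weighted diagonal
sum telescopes to `2 / (2p + 3)`. Hence the sum in the theorem is `(T - t)² / (8 (2p + 3)) → 0`.
-/

open MeasureTheory Filter Finset

/-- Legendre polynomials via the three-term recurrence
`(n+2) P_{n+2}(x) = (2n+3) x P_{n+1}(x) - (n+1) P_n(x)`, with `P_0 = 1`, `P_1 = x`. -/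
noncomputable def legendreP : ℕ → ℝ → ℝ
  | 0 => fun _ => 1
  | 1 => fun x => x
  | n + 2 => fun x =>
      ((2 * (n : ℝ) + 3) * x * legendreP (n + 1) x - ((n : ℝ) + 1) * legendreP n x) / ((n : ℝ) + 2)

/-- The orthonormal Legendre system on `[t, T]`. -/
noncomputable def legendreSys (t T : ℝ) (j : ℕ) (x : ℝ) : ℝ :=
  Real.sqrt ((2 * (j : ℝ) + 1) / (T - t)) * legendreP j ((2 * x - T - t) / (T - t))

/-- The trigonometric orthonormal system on `[t, T]`. -/
noncomputable def trigSys (t T : ℝ) (j : ℕ) (x : ℝ) : ℝ :=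
  if j = 0 then 1 / Real.sqrt (T - t)
  else if j % 2 = 1 then
    Real.sqrt (2 / (T - t)) * Real.sin (2 * Real.pi * (((j + 1) / 2 : ℕ) : ℝ) * (x - t) / (T - t))
  else
    Real.sqrt (2 / (T - t)) * Real.cos (2 * Real.pi * ((j / 2 : ℕ) : ℝ) * (x - t) / (T - t))

/-- Double Fourier coefficient `C_{j₂ j₁}`. -/
noncomputable def C2 (t T : ℝ) (φ : ℕ → ℝ → ℝ) (ψ1 ψ2 : ℝ → ℝ) (j2 j1 : ℕ) : ℝ :=
  ∫ s2 in t..T, ψ2 s2 * φ j2 s2 * ∫ s1 in t..s2, ψ1 s1 * φ j1 s1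

/-- Triple Fourier coefficient `C_{j₃ j₂ j₁}`. -/
noncomputable def C3 (t T : ℝ) (φ : ℕ → ℝ → ℝ) (ψ1 ψ2 ψ3 : ℝ → ℝ) (j3 j2 j1 : ℕ) : ℝ :=
  ∫ s3 in t..T, ψ3 s3 * φ j3 s3 *
    ∫ s2 in t..s3, ψ2 s2 * φ j2 s2 * ∫ s1 in t..s2, ψ1 s1 * φ j1 s1

/-- Fourth-order Fourier coefficient `C_{j₄ j₃ j₂ j₁}` (with `ψ_l ≡ 1`). -/
noncomputable def C4 (t T : ℝ) (φ : ℕ → ℝ → ℝ) (j4 j3 j2 j1 : ℕ) : ℝ :=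
  ∫ s4 in t..T, φ j4 s4 * ∫ s3 in t..s4, φ j3 s3 *
    ∫ s2 in t..s3, φ j2 s2 * ∫ s1 in t..s2, φ j1 s1

lemma legendreP_add_two (n : ℕ) (x : ℝ) : legendreP (n + 2) x =
    ((2 * (n : ℝ) + 3) * x * legendreP (n + 1) x - ((n : ℝ) + 1) * legendreP n x) / ((n : ℝ) + 2) :=
  rfl

@[fun_prop]
lemma continuous_legendreP (n : ℕ) : Continuous (legendreP n) := by
  induction n using Nat.twoStepInduction with
  | zero => exact continuous_const
  | one => exact continuous_id
  | more n h₀ h₁ =>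
    simp only [legendreP]
    fun_prop

lemma legendreP_one (n : ℕ) : legendreP n 1 = 1 := by
  induction n using Nat.twoStepInduction with
  | zero => rfl
  | one => rfl
  | more n h₀ h₁ =>
    rw [legendreP_add_two, h₀, h₁]
    field_simp
    ring

lemma legendreP_neg (n : ℕ) (x : ℝ) : legendreP n (-x) = (-1) ^ n * legendreP n x := by
  induction n using Nat.twoStepInduction generalizing x with
  | zero => simp [legendreP]
  | one => simp [legendreP]
  | more n h₀ h₁ =>
    rw [legendreP_add_two, legendreP_add_two, h₀, h₁]
    field_simp
    ring

lemma legendreP_neg_one (n : ℕ) : legendreP n (-1) = (-1) ^ n := by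
  rw [legendreP_neg, legendreP_one, mul_one]

noncomputable def legendrePDeriv : ℕ → ℝ → ℝ
  | 0 => fun _ => 0
  | 1 => fun _ => 1
  | n + 2 => fun x =>
      ((2 * (n : ℝ) + 3) * (legendreP (n + 1) x + x * legendrePDeriv (n + 1) x)
        - ((n : ℝ) + 1) * legendrePDeriv n x) / ((n : ℝ) + 2)

lemma hasDerivAt_legendreP (n : ℕ) (x : ℝ) :
    HasDerivAt (legendreP n) (legendrePDeriv n x) x := by
  induction n using Nat.twoStepInduction generalizing x with
  | zero => exact hasDerivAt_const x (1 : ℝ)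
  | one => exact hasDerivAt_id x
  | more n h₀ h₁ =>
    have h := ((((hasDerivAt_id x).const_mul (2 * (n : ℝ) + 3)).mul (h₁ x)).sub
      ((h₀ x).const_mul ((n : ℝ) + 1))).div_const ((n : ℝ) + 2)
    refine h.congr_deriv ?_
    simp only [legendrePDeriv, id]
    ring

lemma legendrePDeriv_recurrences (n : ℕ) (x : ℝ) :
    legendrePDeriv (n + 1) x = x * legendrePDeriv n x + ((n : ℝ) + 1) * legendreP n x ∧
    x * legendrePDeriv (n + 1) x - legendrePDeriv n x = ((n : ℝ) + 1) * legendreP (n + 1) x := by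
  induction n with
  | zero => constructor <;> simp [legendreP, legendrePDeriv]
  | succ m ih =>
    obtain ⟨h₁, h₂⟩ := ih
    have hD : legendrePDeriv (m + 2) x =
        ((2 * (m : ℝ) + 3) * (legendreP (m + 1) x + x * legendrePDeriv (m + 1) x)
          - ((m : ℝ) + 1) * legendrePDeriv m x) / ((m : ℝ) + 2) := rfl
    push_cast
    rw [hD, legendreP_add_two]
    constructor
    · field_simp
      linear_combination (m + 1 : ℝ) * h₂
    · field_simp
      linear_combination (2 * (m : ℝ) + 3) * x * h₂ - ((m : ℝ) + 2) * h₁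

lemma legendrePDeriv_add_two (n : ℕ) (x : ℝ) :
    legendrePDeriv (n + 2) x = legendrePDeriv n x + (2 * (n : ℝ) + 3) * legendreP (n + 1) x := by
  have h₁ := (legendrePDeriv_recurrences (n + 1) x).1
  have h₂ := (legendrePDeriv_recurrences n x).2
  push_cast at h₁ ⊢
  linear_combination h₁ + h₂

/-- `legendrePIntegral n x = ∫ s in -1..x, legendreP n s`. -/
noncomputable def legendrePIntegral : ℕ → ℝ → ℝ
  | 0 => fun x => x + 1
  | n + 1 => fun x => (legendreP (n + 2) x - legendreP n x) / (2 * (n : ℝ) + 3)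

lemma hasDerivAt_legendrePIntegral (n : ℕ) (x : ℝ) :
    HasDerivAt (legendrePIntegral n) (legendreP n x) x := by
  cases n with
  | zero => exact (hasDerivAt_id x).add_const 1
  | succ n =>
    have h := ((hasDerivAt_legendreP (n + 2) x).sub (hasDerivAt_legendreP n x)).div_const
      (2 * (n : ℝ) + 3)
    refine h.congr_deriv ?_
    rw [legendrePDeriv_add_two]
    field_simp
    ring

@[fun_prop]
lemma continuous_legendrePIntegral (n : ℕ) : Continuous (legendrePIntegral n) :=
  Differentiable.continuous fun x => (hasDerivAt_legendrePIntegral n x).differentiableAt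

lemma legendrePIntegral_neg_one (n : ℕ) : legendrePIntegral n (-1) = 0 := by
  cases n with
  | zero => norm_num [legendrePIntegral]
  | succ n =>
    simp only [legendrePIntegral, legendreP_neg_one, pow_succ]
    ring

lemma legendrePIntegral_succ_one (n : ℕ) : legendrePIntegral (n + 1) 1 = 0 := by
  simp [legendrePIntegral, legendreP_one]

lemma legendrePIntegral_succ_neg (n : ℕ) (x : ℝ) :
    legendrePIntegral (n + 1) (-x) = (-1) ^ n * legendrePIntegral (n + 1) x := by
  simp only [legendrePIntegral, legendreP_neg, pow_succ]
  ring

lemma integral_legendreP (n : ℕ) (a b : ℝ) :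
    ∫ x in a..b, legendreP n x = legendrePIntegral n b - legendrePIntegral n a :=
  intervalIntegral.integral_eq_sub_of_hasDerivAt (fun x _ => hasDerivAt_legendrePIntegral n x)
    ((continuous_legendreP n).intervalIntegrable _ _)

lemma integral_eq_zero_of_odd {f : ℝ → ℝ} (hf : ∀ x, f (-x) = -f x) (a : ℝ) :
    ∫ x in -a..a, f x = 0 := by
  have h : ∫ x in -a..a, f (-x) = ∫ x in -a..a, f x := by
    rw [intervalIntegral.integral_comp_neg, neg_neg]
  simp only [hf, intervalIntegral.integral_neg] at h
  linarith

lemma integral_pow_mul_legendreP_eq_zero {k n : ℕ} (hkn : k < n) :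
    ∫ x in (-1)..1, x ^ k * legendreP n x = 0 := by
  induction k generalizing n with
  | zero =>
    obtain ⟨m, rfl⟩ := Nat.exists_eq_add_of_lt hkn
    simp [integral_legendreP, legendrePIntegral_succ_one, legendrePIntegral_neg_one]
  | succ k ih =>
    obtain ⟨m, rfl⟩ : ∃ m, n = m + 1 := Nat.exists_eq_add_one.2 (by omega)
    have hibp := intervalIntegral.integral_mul_deriv_eq_deriv_mul (a := -1) (b := 1)
      (fun x _ => hasDerivAt_pow (k + 1) x)
      (fun x _ => hasDerivAt_legendrePIntegral (m + 1) x)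
      (Continuous.intervalIntegrable (by fun_prop) _ _)
      (Continuous.intervalIntegrable (by fun_prop) _ _)
    have hsplit : ∫ x in (-1)..1, ((k + 1 : ℕ) : ℝ) * x ^ k * legendrePIntegral (m + 1) x =
        ((k + 1 : ℕ) : ℝ) / (2 * (m : ℝ) + 3) *
          ((∫ x in (-1)..1, x ^ k * legendreP (m + 2) x) -
            ∫ x in (-1)..1, x ^ k * legendreP m x) := by
      rw [← intervalIntegral.integral_sub (Continuous.intervalIntegrable (by fun_prop) _ _)
          (Continuous.intervalIntegrable (by fun_prop) _ _),
        ← intervalIntegral.integral_const_mul]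
      congr 1
      ext x
      simp only [legendrePIntegral]
      ring
    rw [Nat.add_sub_cancel] at hibp
    rw [hibp, hsplit, ih (by omega), ih (by omega), legendrePIntegral_succ_one,
      legendrePIntegral_neg_one]
    ring

lemma exists_polynomial_legendreP (n : ℕ) :
    ∃ f : Polynomial ℝ, f.natDegree ≤ n ∧ ∀ x, legendreP n x = f.eval x := by
  induction n using Nat.twoStepInduction with
  | zero => exact ⟨1, by simp, fun x => by simp [legendreP]⟩
  | one => exact ⟨Polynomial.X, by simp, fun x => by simp [legendreP]⟩
  | more n h₀ h₁ =>
    obtain ⟨f₀, hd₀, he₀⟩ := h₀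
    obtain ⟨f₁, hd₁, he₁⟩ := h₁
    refine ⟨Polynomial.C ((2 * (n : ℝ) + 3) / ((n : ℝ) + 2)) * Polynomial.X * f₁
      - Polynomial.C (((n : ℝ) + 1) / ((n : ℝ) + 2)) * f₀, ?_, fun x => ?_⟩
    · refine (Polynomial.natDegree_sub_le _ _).trans (max_le ?_ ?_)
      · refine Polynomial.natDegree_mul_le.trans ?_
        have : (Polynomial.C ((2 * (n : ℝ) + 3) / ((n : ℝ) + 2)) * Polynomial.X).natDegree ≤ 1 :=
          Polynomial.natDegree_C_mul_le _ _ |>.trans (by simp)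
        omega
      · exact Polynomial.natDegree_C_mul_le _ _ |>.trans (by omega)
    · rw [legendreP_add_two, he₀, he₁]
      simp only [Polynomial.eval_sub, Polynomial.eval_mul, Polynomial.eval_C, Polynomial.eval_X]
      field_simp

lemma integral_legendreP_mul_legendreP_of_lt {i j : ℕ} (hij : i < j) :
    ∫ x in (-1)..1, legendreP i x * legendreP j x = 0 := by
  obtain ⟨f, hdeg, hf⟩ := exists_polynomial_legendreP i
  have hexpand : ∀ x, legendreP i x * legendreP j x
      = ∑ k ∈ range (i + 1), f.coeff k * (x ^ k * legendreP j x) := by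
    intro x
    rw [hf, Polynomial.eval_eq_sum_range' (Nat.lt_succ_of_le hdeg), sum_mul]
    simp only [mul_assoc]
  simp_rw [hexpand]
  rw [intervalIntegral.integral_finsetSum fun k _ =>
    Continuous.intervalIntegrable (by fun_prop) _ _]
  refine sum_eq_zero fun k hk => ?_
  rw [intervalIntegral.integral_const_mul,
    integral_pow_mul_legendreP_eq_zero ((mem_range.1 hk).trans_le hij), mul_zero]

lemma integral_legendreP_mul_legendreP_of_ne {i j : ℕ} (hij : i ≠ j) :
    ∫ x in (-1)..1, legendreP i x * legendreP j x = 0 := by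
  rcases hij.lt_or_gt with h | h
  · exact integral_legendreP_mul_legendreP_of_lt h
  · simp_rw [mul_comm (legendreP i _)]
    exact integral_legendreP_mul_legendreP_of_lt h

/-- Evaluating `∫ x P_{n+1} P_{n+2}` with the recurrence at `n` and at `n + 1` relates
`∫ P_{n+2}^2` to `∫ P_{n+1}^2`. -/
lemma integral_legendreP_mul_self (n : ℕ) :
    ∫ x in (-1)..1, legendreP n x * legendreP n x = 2 / (2 * (n : ℝ) + 1) := by
  induction n using Nat.twoStepInduction with
  | zero => norm_num [legendreP]
  | one =>
    simp_rw [legendreP, ← sq]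
    norm_num [integral_pow]
  | more n _ ih =>
    set A := ∫ x in (-1)..1, x * legendreP (n + 1) x * legendreP (n + 2) x
    have hfirst : ((n : ℝ) + 2) * ∫ x in (-1)..1, legendreP (n + 2) x * legendreP (n + 2) x
        = (2 * (n : ℝ) + 3) * A := by
      have hpt : ∀ x, ((n : ℝ) + 2) * (legendreP (n + 2) x * legendreP (n + 2) x)
          = (2 * (n : ℝ) + 3) * (x * legendreP (n + 1) x * legendreP (n + 2) x)
            - ((n : ℝ) + 1) * (legendreP n x * legendreP (n + 2) x) := by
        intro x
        rw [legendreP_add_two n x]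
        field_simp
      rw [← intervalIntegral.integral_const_mul, funext hpt,
        intervalIntegral.integral_sub (Continuous.intervalIntegrable (by fun_prop) _ _)
          (Continuous.intervalIntegrable (by fun_prop) _ _),
        intervalIntegral.integral_const_mul, intervalIntegral.integral_const_mul,
        integral_legendreP_mul_legendreP_of_ne (by omega), mul_zero, sub_zero]
    have hsecond : (2 * (n : ℝ) + 5) * A
        = ((n : ℝ) + 2) * ∫ x in (-1)..1, legendreP (n + 1) x * legendreP (n + 1) x := by
      have hpt : ∀ x, (2 * (n : ℝ) + 5) * (x * legendreP (n + 1) x * legendreP (n + 2) x)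
          = ((n : ℝ) + 3) * (legendreP (n + 1) x * legendreP (n + 3) x)
            + ((n : ℝ) + 2) * (legendreP (n + 1) x * legendreP (n + 1) x) := by
        intro x
        rw [legendreP_add_two (n + 1) x]
        push_cast
        field_simp
        ring
      rw [← intervalIntegral.integral_const_mul, funext hpt,
        intervalIntegral.integral_add (Continuous.intervalIntegrable (by fun_prop) _ _)
          (Continuous.intervalIntegrable (by fun_prop) _ _),
        intervalIntegral.integral_const_mul, intervalIntegral.integral_const_mul,
        integral_legendreP_mul_legendreP_of_ne (by omega), mul_zero, zero_add]
    rw [ih] at hsecond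
    push_cast at hsecond ⊢
    have hA : A = 2 * ((n : ℝ) + 2) / ((2 * (n : ℝ) + 3) * (2 * (n : ℝ) + 5)) := by
      field_simp at hsecond ⊢
      linear_combination hsecond
    calc _ = (2 * (n : ℝ) + 3) * A / ((n : ℝ) + 2) := by
          rw [← hfirst]
          field_simp
      _ = _ := by
          rw [hA]
          field_simp
          ring

lemma integral_legendreP_mul_legendrePIntegral_zero (a : ℕ) :
    ∫ x in (-1)..1, legendreP a x * legendrePIntegral 0 x =
      (∫ x in (-1)..1, legendreP a x * legendreP 1 x) +
        ∫ x in (-1)..1, legendreP a x * legendreP 0 x := by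
  rw [← intervalIntegral.integral_add (Continuous.intervalIntegrable (by fun_prop) _ _)
    (Continuous.intervalIntegrable (by fun_prop) _ _)]
  congr 1
  ext x
  simp only [legendrePIntegral, legendreP]
  ring

lemma integral_legendreP_mul_legendrePIntegral_succ (a b : ℕ) :
    ∫ x in (-1)..1, legendreP a x * legendrePIntegral (b + 1) x =
      ((∫ x in (-1)..1, legendreP a x * legendreP (b + 2) x) -
        ∫ x in (-1)..1, legendreP a x * legendreP b x) / (2 * (b : ℝ) + 3) := by
  rw [← intervalIntegral.integral_sub (Continuous.intervalIntegrable (by fun_prop) _ _)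
    (Continuous.intervalIntegrable (by fun_prop) _ _), ← intervalIntegral.integral_div]
  congr 1
  ext x
  simp only [legendrePIntegral]
  ring

lemma integral_legendrePIntegral_succ_sq (b : ℕ) :
    ∫ x in (-1)..1, legendrePIntegral (b + 1) x ^ 2 =
      (2 / (2 * (b : ℝ) + 5) + 2 / (2 * (b : ℝ) + 1)) / (2 * (b : ℝ) + 3) ^ 2 := by
  have hsplit : ∫ x in (-1)..1, legendrePIntegral (b + 1) x ^ 2 =
      ((∫ x in (-1)..1, legendreP (b + 2) x * legendrePIntegral (b + 1) x) -
        ∫ x in (-1)..1, legendreP b x * legendrePIntegral (b + 1) x) / (2 * (b : ℝ) + 3) := by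
    rw [← intervalIntegral.integral_sub (Continuous.intervalIntegrable (by fun_prop) _ _)
      (Continuous.intervalIntegrable (by fun_prop) _ _), ← intervalIntegral.integral_div]
    congr 1
    ext x
    rw [sq]
    nth_rw 1 [legendrePIntegral]
    ring
  rw [hsplit, integral_legendreP_mul_legendrePIntegral_succ,
    integral_legendreP_mul_legendrePIntegral_succ, integral_legendreP_mul_self,
    integral_legendreP_mul_self, integral_legendreP_mul_legendreP_of_ne (by omega),
    integral_legendreP_mul_legendreP_of_ne (by omega)]
  push_cast
  field_simp
  ring

lemma integral_add_one_mul_legendrePIntegral_sq (n : ℕ) :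
    ∫ x in (-1)..1, (x + 1) * legendrePIntegral (n + 1) x ^ 2 =
      ∫ x in (-1)..1, legendrePIntegral (n + 1) x ^ 2 := by
  have hodd : ∫ x in (-1)..1, x * legendrePIntegral (n + 1) x ^ 2 = 0 := by
    refine integral_eq_zero_of_odd (fun x => ?_) 1
    rw [legendrePIntegral_succ_neg, mul_pow, ← pow_mul, pow_mul', neg_one_sq, one_pow]
    ring
  simp_rw [add_mul, one_mul]
  rw [intervalIntegral.integral_add (Continuous.intervalIntegrable (by fun_prop) _ _)
    (Continuous.intervalIntegrable (by fun_prop) _ _), hodd, zero_add]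

lemma C4_diag_eq {α β : ℝ} {φ : ℕ → ℝ → ℝ} {a b : ℕ} {F G : ℝ → ℝ}
    (hf : Continuous (φ a)) (hg : Continuous (φ b))
    (hF : ∀ x, HasDerivAt F (φ a x) x) (hG : ∀ x, HasDerivAt G (φ b x) x)
    (hFα : F α = 0) (hGα : G α = 0) :
    C4 α β φ a b a b =
      (∫ x in α..β, φ a x * G x) ^ 2 / 2 - F β * (∫ x in α..β, φ a x * G x ^ 2)
        + ∫ x in α..β, F x * φ a x * G x ^ 2 := by
  have hFc : Continuous F := Differentiable.continuous fun x => (hF x).differentiableAt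
  have hGc : Continuous G := Differentiable.continuous fun x => (hG x).differentiableAt
  set H : ℝ → ℝ := fun y => ∫ x in α..y, φ a x * G x
  set W : ℝ → ℝ := fun y => ∫ x in α..y, φ a x * G x ^ 2
  have hH : ∀ y, HasDerivAt H (φ a y * G y) y :=
    fun y => (Continuous.integral_hasStrictDerivAt (by fun_prop) α y).hasDerivAt
  have hW : ∀ y, HasDerivAt W (φ a y * G y ^ 2) y :=
    fun y => (Continuous.integral_hasStrictDerivAt (by fun_prop) α y).hasDerivAt
  have hGint : ∀ y, ∫ x in α..y, φ b x = G y := fun y => by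
    rw [intervalIntegral.integral_eq_sub_of_hasDerivAt (fun x _ => hG x)
      (hg.intervalIntegrable _ _), hGα, sub_zero]
  have hinner : ∀ y, ∫ x in α..y, φ b x * H x = G y * H y - W y := fun y => by
    have hK : ∀ x, HasDerivAt (fun u => G u * H u - W u) (φ b x * H x) x := fun x =>
      (((hG x).mul (hH x)).sub (hW x)).congr_deriv (by ring)
    rw [intervalIntegral.integral_eq_sub_of_hasDerivAt (fun x _ => hK x)
      (Continuous.intervalIntegrable (by fun_prop) _ _)]
    simp [H, W, hGα]
  set V : ℝ → ℝ := fun y => ∫ x in α..y, F x * φ a x * G x ^ 2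
  have hV : ∀ y, HasDerivAt V (F y * φ a y * G y ^ 2) y :=
    fun y => (Continuous.integral_hasStrictDerivAt (by fun_prop) α y).hasDerivAt
  have hprim : ∀ y, HasDerivAt (fun u => H u ^ 2 / 2 - F u * W u + V u)
      (φ a y * (G y * H y - W y)) y := fun y =>
    ((((hH y).fun_pow 2).div_const 2).sub ((hF y).mul (hW y))).add (hV y) |>.congr_deriv (by ring)
  rw [C4]
  simp only [hGint]
  change ∫ y in α..β, φ a y * ∫ x in α..y, φ b x * H x = _
  simp only [hinner]
  rw [intervalIntegral.integral_eq_sub_of_hasDerivAt (fun x _ => hprim x)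
    (Continuous.intervalIntegrable (by fun_prop) _ _)]
  simp [H, W, V, hFα]

lemma C4_legendreP_diag (a b : ℕ) :
    C4 (-1) 1 legendreP a b a b =
      (∫ x in (-1)..1, legendreP a x * legendrePIntegral b x) ^ 2 / 2
        - legendrePIntegral a 1 * (∫ x in (-1)..1, legendreP a x * legendrePIntegral b x ^ 2)
        + ∫ x in (-1)..1, legendrePIntegral a x * legendreP a x * legendrePIntegral b x ^ 2 :=
  C4_diag_eq (continuous_legendreP a) (continuous_legendreP b) (hasDerivAt_legendrePIntegral a)
    (hasDerivAt_legendrePIntegral b) (legendrePIntegral_neg_one a) (legendrePIntegral_neg_one b)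

noncomputable def weightedLegendreC4 (a b : ℕ) : ℝ :=
  (2 * (a : ℝ) + 1) * (2 * (b : ℝ) + 1) * C4 (-1) 1 legendreP a b a b

lemma weightedLegendreC4_zero_zero : weightedLegendreC4 0 0 = 2 / 3 := by
  have hsq : ∫ x in (-1 : ℝ)..1, (x + 1) ^ 2 = 8 / 3 := by
    rw [intervalIntegral.integral_comp_add_right (fun x => x ^ 2)]
    norm_num [integral_pow]
  have hcube : ∫ x in (-1 : ℝ)..1, (x + 1) * 1 * (x + 1) ^ 2 = 4 := by
    rw [show (fun x : ℝ => (x + 1) * 1 * (x + 1) ^ 2) = fun x => (x + 1) ^ 3 by ext; ring,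
      intervalIntegral.integral_comp_add_right (fun x => x ^ 3)]
    norm_num [integral_pow]
  rw [weightedLegendreC4, C4_legendreP_diag]
  simp only [legendreP, legendrePIntegral, one_mul]
  rw [hsq, hcube]
  norm_num

lemma weightedLegendreC4_succ_succ (i j : ℕ) :
    weightedLegendreC4 (i + 1) (j + 1) = (2 * (i : ℝ) + 3) * (2 * (j : ℝ) + 3) *
      (∫ x in (-1)..1, legendreP (i + 1) x * legendrePIntegral (j + 1) x) ^ 2 / 2 := by
  have hodd : ∫ x in (-1)..1, legendrePIntegral (i + 1) x * legendreP (i + 1) x *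
      legendrePIntegral (j + 1) x ^ 2 = 0 := by
    refine integral_eq_zero_of_odd (fun x => ?_) 1
    rw [legendrePIntegral_succ_neg, legendreP_neg, legendrePIntegral_succ_neg, mul_pow,
      ← pow_mul, pow_mul', neg_one_sq, one_pow, pow_succ]
    have : ((-1 : ℝ) ^ i) ^ 2 = 1 := by rw [← pow_mul, pow_mul', neg_one_sq, one_pow]
    linear_combination (-(legendrePIntegral (i + 1) x * legendreP (i + 1) x *
      legendrePIntegral (j + 1) x ^ 2)) * this
  rw [weightedLegendreC4, C4_legendreP_diag, legendrePIntegral_succ_one, hodd]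
  push_cast
  ring

lemma weightedLegendreC4_zero_succ (j : ℕ) :
    weightedLegendreC4 0 (j + 1) = (2 * (j : ℝ) + 3) *
      ((∫ x in (-1)..1, legendreP 0 x * legendrePIntegral (j + 1) x) ^ 2 / 2
        - ∫ x in (-1)..1, legendrePIntegral (j + 1) x ^ 2) := by
  have hQ0 : ∀ x, legendrePIntegral 0 x * legendreP 0 x * legendrePIntegral (j + 1) x ^ 2 =
      (x + 1) * legendrePIntegral (j + 1) x ^ 2 := fun x => by
    simp [legendrePIntegral, legendreP]
  rw [weightedLegendreC4, C4_legendreP_diag, funext hQ0, integral_add_one_mul_legendrePIntegral_sq]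
  simp only [legendreP, legendrePIntegral, one_mul]
  push_cast
  ring

lemma weightedLegendreC4_succ_zero (i : ℕ) :
    weightedLegendreC4 (i + 1) 0 = (2 * (i : ℝ) + 3) *
      ((∫ x in (-1)..1, legendreP (i + 1) x * legendrePIntegral 0 x) ^ 2 / 2
        - ∫ x in (-1)..1, legendrePIntegral (i + 1) x ^ 2) := by
  have hibp : ∫ x in (-1)..1, legendrePIntegral (i + 1) x * legendreP (i + 1) x *
      legendrePIntegral 0 x ^ 2 = -∫ x in (-1)..1, legendrePIntegral (i + 1) x ^ 2 := by
    have hprim : ∀ x,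
        HasDerivAt (fun u => legendrePIntegral (i + 1) u ^ 2 * legendrePIntegral 0 u ^ 2 / 2)
          (legendrePIntegral (i + 1) x * legendreP (i + 1) x * legendrePIntegral 0 x ^ 2
            + (x + 1) * legendrePIntegral (i + 1) x ^ 2) x := fun x => by
      refine ((((hasDerivAt_legendrePIntegral (i + 1) x).fun_pow 2).mul
        ((hasDerivAt_legendrePIntegral 0 x).fun_pow 2)).div_const 2).congr_deriv ?_
      simp only [show legendreP 0 x = 1 from rfl, show legendrePIntegral 0 x = x + 1 from rfl]
      ring
    have h := intervalIntegral.integral_eq_sub_of_hasDerivAt (a := -1) (b := 1)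
      (fun x _ => hprim x) (Continuous.intervalIntegrable (by fun_prop) _ _)
    rw [intervalIntegral.integral_add (Continuous.intervalIntegrable (by fun_prop) _ _)
      (Continuous.intervalIntegrable (by fun_prop) _ _),
      integral_add_one_mul_legendrePIntegral_sq, legendrePIntegral_succ_one,
      legendrePIntegral_neg_one] at h
    norm_num at h
    linarith
  rw [weightedLegendreC4, C4_legendreP_diag, legendrePIntegral_succ_one, hibp]
  push_cast
  ring

lemma weightedLegendreC4_zero_one : weightedLegendreC4 0 1 = -2 / 15 := by
  rw [weightedLegendreC4_zero_succ, integral_legendreP_mul_legendrePIntegral_succ,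
    integral_legendrePIntegral_succ_sq, integral_legendreP_mul_self,
    integral_legendreP_mul_legendreP_of_ne (by omega)]
  norm_num

lemma weightedLegendreC4_one_zero : weightedLegendreC4 1 0 = -2 / 15 := by
  rw [weightedLegendreC4_succ_zero, integral_legendreP_mul_legendrePIntegral_zero,
    integral_legendrePIntegral_succ_sq, integral_legendreP_mul_self,
    integral_legendreP_mul_legendreP_of_ne (by omega)]
  norm_num

lemma weightedLegendreC4_zero_add_two (r : ℕ) :
    weightedLegendreC4 0 (r + 2) = -4 / ((2 * (r : ℝ) + 3) * (2 * (r : ℝ) + 7)) := by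
  rw [weightedLegendreC4_zero_succ, integral_legendreP_mul_legendrePIntegral_succ,
    integral_legendrePIntegral_succ_sq, integral_legendreP_mul_legendreP_of_ne (by omega),
    integral_legendreP_mul_legendreP_of_ne (by omega)]
  push_cast
  field_simp
  ring

lemma weightedLegendreC4_add_two_zero (r : ℕ) :
    weightedLegendreC4 (r + 2) 0 = -4 / ((2 * (r : ℝ) + 3) * (2 * (r : ℝ) + 7)) := by
  rw [weightedLegendreC4_succ_zero, integral_legendreP_mul_legendrePIntegral_zero,
    integral_legendrePIntegral_succ_sq, integral_legendreP_mul_legendreP_of_ne (by omega),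
    integral_legendreP_mul_legendreP_of_ne (by omega)]
  push_cast
  field_simp
  ring

lemma weightedLegendreC4_succ_succ_of_ne {i j : ℕ} (h₁ : i ≠ j + 1) (h₂ : i + 1 ≠ j) :
    weightedLegendreC4 (i + 1) (j + 1) = 0 := by
  rw [weightedLegendreC4_succ_succ, integral_legendreP_mul_legendrePIntegral_succ,
    integral_legendreP_mul_legendreP_of_ne (by omega),
    integral_legendreP_mul_legendreP_of_ne (by omega)]
  simp

lemma weightedLegendreC4_add_two_succ (j : ℕ) :
    weightedLegendreC4 (j + 2) (j + 1) = 2 / ((2 * (j : ℝ) + 3) * (2 * (j : ℝ) + 5)) := by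
  rw [weightedLegendreC4_succ_succ, integral_legendreP_mul_legendrePIntegral_succ,
    integral_legendreP_mul_self, integral_legendreP_mul_legendreP_of_ne (by omega)]
  push_cast
  field_simp
  ring

lemma weightedLegendreC4_succ_add_two (i : ℕ) :
    weightedLegendreC4 (i + 1) (i + 2) = 2 / ((2 * (i : ℝ) + 3) * (2 * (i : ℝ) + 5)) := by
  rw [weightedLegendreC4_succ_succ, integral_legendreP_mul_legendrePIntegral_succ,
    integral_legendreP_mul_self, integral_legendreP_mul_legendreP_of_ne (by omega)]
  push_cast
  field_simp
  ring

lemma sum_range_succ_sum_range_succ {M : Type*} [AddCommMonoid M] (f : ℕ → ℕ → M) (n : ℕ) :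
    ∑ a ∈ range (n + 1), ∑ b ∈ range (n + 1), f a b =
      ∑ a ∈ range n, ∑ b ∈ range n, f a b + ∑ a ∈ range n, f a n + ∑ b ∈ range (n + 1), f n b := by
  simp_rw [sum_range_succ (f _), sum_add_distrib, sum_range_succ (fun a => f a n)]
  rw [sum_range_succ]
  abel

lemma sum_weightedLegendreC4_col (r : ℕ) :
    ∑ a ∈ range (r + 2), weightedLegendreC4 a (r + 2) =
      weightedLegendreC4 0 (r + 2) + weightedLegendreC4 (r + 1) (r + 2) := by
  refine sum_eq_add 0 (r + 1) (by omega) (fun a ha hne => ?_) (by simp) (by simp)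
  obtain ⟨i, rfl⟩ := Nat.exists_eq_succ_of_ne_zero hne.1
  have := mem_range.1 ha
  exact weightedLegendreC4_succ_succ_of_ne (by omega) (by omega)

lemma sum_weightedLegendreC4_row (r : ℕ) :
    ∑ b ∈ range (r + 3), weightedLegendreC4 (r + 2) b =
      weightedLegendreC4 (r + 2) 0 + weightedLegendreC4 (r + 2) (r + 1) := by
  refine sum_eq_add 0 (r + 1) (by omega) (fun b hb hne => ?_) (by simp) (by simp)
  obtain ⟨j, rfl⟩ := Nat.exists_eq_succ_of_ne_zero hne.1
  have := mem_range.1 hb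
  exact weightedLegendreC4_succ_succ_of_ne (by omega) (by omega)

lemma sum_weightedLegendreC4 : ∀ p : ℕ,
    ∑ a ∈ range (p + 1), ∑ b ∈ range (p + 1), weightedLegendreC4 a b = 2 / (2 * (p : ℝ) + 3)
  | 0 => by simp [weightedLegendreC4_zero_zero]
  | 1 => by
    simp only [sum_range_succ, sum_range_zero, zero_add, weightedLegendreC4_zero_zero,
      weightedLegendreC4_zero_one, weightedLegendreC4_one_zero,
      weightedLegendreC4_succ_succ_of_ne (i := 0) (j := 0) (by omega) (by omega)]
    norm_num
  | r + 2 => by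
    rw [sum_range_succ_sum_range_succ, sum_weightedLegendreC4 (r + 1), sum_weightedLegendreC4_col,
      sum_weightedLegendreC4_row, weightedLegendreC4_zero_add_two, weightedLegendreC4_add_two_zero,
      weightedLegendreC4_succ_add_two, weightedLegendreC4_add_two_succ]
    push_cast
    field_simp
    ring

lemma integral_comp_mul_add_eq_mul {f : ℝ → ℝ} {c : ℝ} (hc : c ≠ 0) (d α y : ℝ) :
    ∫ s in c * α + d..c * y + d, f s = c * ∫ u in α..y, f (c * u + d) := by
  rw [intervalIntegral.integral_comp_mul_add f hc, smul_eq_mul, mul_inv_cancel_left₀ hc]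

lemma C4_comp_mul_add {c : ℝ} (hc : c ≠ 0) (d α β : ℝ) (φ : ℕ → ℝ → ℝ) (j4 j3 j2 j1 : ℕ) :
    C4 (c * α + d) (c * β + d) φ j4 j3 j2 j1 =
      c ^ 4 * C4 α β (fun j u => φ j (c * u + d)) j4 j3 j2 j1 := by
  simp only [C4, integral_comp_mul_add_eq_mul hc, mul_left_comm _ c,
    intervalIntegral.integral_const_mul]
  ring

lemma C4_const_mul (α β : ℝ) (k : ℕ → ℝ) (φ : ℕ → ℝ → ℝ) (j4 j3 j2 j1 : ℕ) :
    C4 α β (fun j x => k j * φ j x) j4 j3 j2 j1 =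
      k j4 * k j3 * k j2 * k j1 * C4 α β φ j4 j3 j2 j1 := by
  simp only [C4, mul_assoc, intervalIntegral.integral_const_mul, mul_left_comm (φ _ _) (k _)]

lemma C4_legendreSys_diag {t T : ℝ} (hT : t < T) (a b : ℕ) :
    C4 t T (legendreSys t T) a b a b = (T - t) ^ 2 / 16 * weightedLegendreC4 a b := by
  have hL : T - t ≠ 0 := sub_ne_zero.2 hT.ne'
  have hc : (T - t) / 2 ≠ 0 := div_ne_zero hL two_ne_zero
  have key := C4_comp_mul_add hc ((t + T) / 2) (-1) 1 (legendreSys t T) a b a b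
  rw [show (T - t) / 2 * -1 + (t + T) / 2 = t by ring,
    show (T - t) / 2 * 1 + (t + T) / 2 = T by ring] at key
  have hsys : (fun (j : ℕ) (u : ℝ) => legendreSys t T j ((T - t) / 2 * u + (t + T) / 2)) =
      fun (j : ℕ) (u : ℝ) => Real.sqrt ((2 * (j : ℝ) + 1) / (T - t)) * legendreP j u := by
    ext j u
    rw [legendreSys]
    congr 2
    field_simp
    ring
  have hsq : ∀ j : ℕ, Real.sqrt ((2 * (j : ℝ) + 1) / (T - t)) *
      Real.sqrt ((2 * (j : ℝ) + 1) / (T - t)) = (2 * (j : ℝ) + 1) / (T - t) :=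
    fun j => Real.mul_self_sqrt (div_nonneg (by positivity) (sub_nonneg.2 hT.le))
  have hprod : Real.sqrt ((2 * (a : ℝ) + 1) / (T - t)) * Real.sqrt ((2 * (b : ℝ) + 1) / (T - t)) *
      Real.sqrt ((2 * (a : ℝ) + 1) / (T - t)) * Real.sqrt ((2 * (b : ℝ) + 1) / (T - t)) =
      (2 * (a : ℝ) + 1) / (T - t) * ((2 * (b : ℝ) + 1) / (T - t)) := by
    linear_combination (Real.sqrt ((2 * (b : ℝ) + 1) / (T - t)) *
      Real.sqrt ((2 * (b : ℝ) + 1) / (T - t))) * hsq a + (2 * (a : ℝ) + 1) / (T - t) * hsq b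
  rw [key, hsys, C4_const_mul, hprod, weightedLegendreC4]
  field_simp
  ring

theorem stmt13 (t T : ℝ) (hT : t < T) :
    Tendsto (fun p : ℕ => ∑ a ∈ Finset.range (p + 1), ∑ b ∈ Finset.range (p + 1),
      C4 t T (legendreSys t T) a b a b)
      atTop (nhds (0)) := by
  have hsum : ∀ p : ℕ, ∑ a ∈ range (p + 1), ∑ b ∈ range (p + 1), C4 t T (legendreSys t T) a b a b
      = (T - t) ^ 2 / 16 * (2 / (2 * (p : ℝ) + 3)) := fun p => by
    simp_rw [C4_legendreSys_diag hT, ← mul_sum, sum_weightedLegendreC4]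
  have hlim : Tendsto (fun p : ℕ => 2 / (2 * (p : ℝ) + 3)) atTop (nhds 0) :=
    tendsto_const_nhds.div_atTop <| tendsto_atTop_add_const_right _ 3 <|
      tendsto_natCast_atTop_atTop.const_mul_atTop two_pos
  simpa [hsum] using hlim.const_mul ((T - t) ^ 2 / 16)
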